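/- arXiv:1603.07909 — 3 statements merged into one kernel-verified Lean document; each statement's English description precedes it below -/
import Mathlib

section
/- Let (P_t)_{t≥0} be a sub-Markovian semigroup on a measurable space E (so P_t 1_E(x) = P_x(t < τ_∂)), satisfying the two-sided estimate c⁻¹ f(x) μ(·) ≤ δ_x P_{t0}(·) ≤ c f(x) μ(·) with μ a probability measure and ‖f‖_∞ ≤ c. Then for every probability measure π on E, every z ∈ E and every t ≥ 0, one has P_π(t < τ_∂) ≥ c⁻³ π(f) P_z(t < τ_∂), where P_π(t < τ_∂) = ∫ P_t 1_E(x) π(dx). -/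
/-!
Write `S t x = P t x univ` for the survival probability. For `t ≥ t0` the semigroup property gives
`S t x = ∫ S (t - t0) d(P t0 x)`, and the two-sided estimate squeezes this integral between
`c⁻¹ f x · M` and `c f x · M`, where `M = ∫ S (t - t0) dμ` does not depend on the starting point.
Hence `c⁻¹ f x · S t z ≤ c f z · S t x ≤ c² · S t x`. For `t ≤ t0` the same bound follows from
`S t z ≤ 1` and `S t x ≥ S t0 x ≥ c⁻¹ f x`, using `c ≥ 1`. Integrating in `x` against `π` gives
the theorem.
-/

open MeasureTheory Set

open scoped ENNReal

section MeasureComparison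

variable {E : Type*} [MeasurableSpace E] {μ ν : Measure E} {a : ℝ≥0∞}

theorem mul_lintegral_le_lintegral_of_forall_mul_le
    (h : ∀ A, MeasurableSet A → a * μ A ≤ ν A) (g : E → ℝ≥0∞) :
    a * ∫⁻ y, g y ∂μ ≤ ∫⁻ y, g y ∂ν := by
  rw [← smul_eq_mul, ← lintegral_smul_measure]
  exact lintegral_mono' (Measure.le_iff.2 h) le_rfl

theorem lintegral_le_mul_lintegral_of_forall_le_mul
    (h : ∀ A, MeasurableSet A → ν A ≤ a * μ A) (g : E → ℝ≥0∞) :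
    ∫⁻ y, g y ∂ν ≤ a * ∫⁻ y, g y ∂μ := by
  rw [← smul_eq_mul, ← lintegral_smul_measure]
  exact lintegral_mono' (Measure.le_iff.2 h) le_rfl

theorem mul_lintegral_le_mul_lintegral_of_two_sided {ν : E → Measure E} {a b : E → ℝ≥0∞}
    (hlow : ∀ x A, MeasurableSet A → a x * μ A ≤ ν x A)
    (hup : ∀ x A, MeasurableSet A → ν x A ≤ b x * μ A) (g : E → ℝ≥0∞) (x z : E) :
    a x * ∫⁻ y, g y ∂ν z ≤ b z * ∫⁻ y, g y ∂ν x :=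
  calc a x * ∫⁻ y, g y ∂ν z
      ≤ a x * (b z * ∫⁻ y, g y ∂μ) := by
        gcongr; exact lintegral_le_mul_lintegral_of_forall_le_mul (hup z) g
    _ = b z * (a x * ∫⁻ y, g y ∂μ) := mul_left_comm _ _ _
    _ ≤ b z * ∫⁻ y, g y ∂ν x := by
        gcongr; exact mul_lintegral_le_lintegral_of_forall_mul_le (hlow x) g

theorem one_le_of_two_sided_estimate [IsProbabilityMeasure μ] {c y : ℝ} (hc : 0 < c) (hy : 0 < y)
    (h : ENNReal.ofReal (c⁻¹ * y) * μ univ ≤ ν univ ∧ ν univ ≤ ENNReal.ofReal (c * y) * μ univ) :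
    1 ≤ c := by
  have hle := h.1.trans h.2
  rw [measure_univ, mul_one, mul_one, ENNReal.ofReal_le_ofReal_iff (by positivity)] at hle
  have hinv : c⁻¹ ≤ c := le_of_mul_le_mul_right hle hy
  by_contra! hlt
  linarith [(one_lt_inv₀ hc).2 hlt]

theorem ofReal_mul_integral_eq_lintegral_ofReal_mul [IsFiniteMeasure μ] {f : E → ℝ} {k C : ℝ}
    (hk : 0 ≤ k) (hf_meas : Measurable f) (hf_nonneg : ∀ x, 0 ≤ f x) (hf_bdd : ∀ x, f x ≤ C) :
    ENNReal.ofReal (k * ∫ x, f x ∂μ) = ∫⁻ x, ENNReal.ofReal (k * f x) ∂μ := by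
  have hf_int : Integrable f μ := Integrable.of_bound hf_meas.aestronglyMeasurable C
    (ae_of_all _ fun x => by rw [Real.norm_of_nonneg (hf_nonneg x)]; exact hf_bdd x)
  rw [← integral_const_mul, ofReal_integral_eq_lintegral_ofReal (hf_int.const_mul k)
    (ae_of_all _ fun x => mul_nonneg hk (hf_nonneg x))]

end MeasureComparison

section Survival

variable {E : Type*} [MeasurableSpace E] {P : ℝ → E → Measure E} {μ : Measure E}
  {a b : E → ℝ≥0∞} {t0 t : ℝ}

theorem mul_survival_le_survival_of_le [IsProbabilityMeasure μ]
    (hP_sub : ∀ t, 0 ≤ t → ∀ x, P t x univ ≤ 1)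
    (h_mono : ∀ s t, 0 ≤ s → s ≤ t → ∀ x, P t x univ ≤ P s x univ)
    (hlow : ∀ x A, MeasurableSet A → a x * μ A ≤ P t0 x A)
    (ht : 0 ≤ t) (hle : t ≤ t0) (x z : E) :
    a x * P t z univ ≤ P t x univ :=
  calc a x * P t z univ
      ≤ a x * μ univ := by rw [measure_univ (μ := μ)]; exact mul_le_mul_right (hP_sub t ht z) _
    _ ≤ P t0 x univ := hlow x univ .univ
    _ ≤ P t x univ := h_mono t t0 ht hle x

theorem mul_survival_le_mul_survival_of_le (ht0 : 0 ≤ t0)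
    (h_semigroup : ∀ s t, 0 ≤ s → 0 ≤ t → ∀ x, P (s + t) x univ = ∫⁻ y, P t y univ ∂P s x)
    (hlow : ∀ x A, MeasurableSet A → a x * μ A ≤ P t0 x A)
    (hup : ∀ x A, MeasurableSet A → P t0 x A ≤ b x * μ A) (hle : t0 ≤ t) (x z : E) :
    a x * P t z univ ≤ b z * P t x univ := by
  have hsplit : ∀ y, P t y univ = ∫⁻ w, P (t - t0) w univ ∂P t0 y := fun y => by
    simpa using h_semigroup t0 (t - t0) ht0 (sub_nonneg.2 hle) y
  rw [hsplit x, hsplit z]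
  exact mul_lintegral_le_mul_lintegral_of_two_sided hlow hup _ x z

theorem mul_survival_le_const_mul_survival [IsProbabilityMeasure μ] {K : ℝ≥0∞} (ht0 : 0 ≤ t0)
    (hP_sub : ∀ t, 0 ≤ t → ∀ x, P t x univ ≤ 1)
    (h_semigroup : ∀ s t, 0 ≤ s → 0 ≤ t → ∀ x, P (s + t) x univ = ∫⁻ y, P t y univ ∂P s x)
    (h_mono : ∀ s t, 0 ≤ s → s ≤ t → ∀ x, P t x univ ≤ P s x univ)
    (hlow : ∀ x A, MeasurableSet A → a x * μ A ≤ P t0 x A)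
    (hup : ∀ x A, MeasurableSet A → P t0 x A ≤ b x * μ A)
    (hK : 1 ≤ K) (hbK : ∀ z, b z ≤ K) (ht : 0 ≤ t) (x z : E) :
    a x * P t z univ ≤ K * P t x univ := by
  rcases le_total t t0 with hle | hle
  · exact (mul_survival_le_survival_of_le hP_sub h_mono hlow ht hle x z).trans
      (le_mul_of_one_le_left' hK)
  · exact (mul_survival_le_mul_survival_of_le ht0 h_semigroup hlow hup hle x z).trans
      (mul_le_mul_left (hbK z) _)

end Survival

theorem survival_lower_bound_under_two_sided_estimate_general
    {E : Type*} [MeasurableSpace E]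
    (t0 c : ℝ) (ht0 : 0 < t0) (hc : 0 < c)
    (μ : Measure E) [IsProbabilityMeasure μ]
    (f : E → ℝ) (hf_meas : Measurable f) (hf_pos : ∀ x, 0 < f x)
    (hf_bdd : ∀ x, f x ≤ c)
    (P : ℝ → E → Measure E)
    (hP_sub : ∀ t, 0 ≤ t → ∀ x, P t x Set.univ ≤ 1)
    (h_semigroup : ∀ s t, 0 ≤ s → 0 ≤ t → ∀ x, ∀ A : Set E, MeasurableSet A →
      P (s + t) x A = ∫⁻ y, P t y A ∂(P s x))
    (h_mono : ∀ s t, 0 ≤ s → s ≤ t → ∀ x, P t x Set.univ ≤ P s x Set.univ)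
    (h_tse : ∀ x, ∀ A : Set E, MeasurableSet A →
      ENNReal.ofReal (c⁻¹ * f x) * μ A ≤ P t0 x A ∧
      P t0 x A ≤ ENNReal.ofReal (c * f x) * μ A) :
    ∀ π : Measure E, IsProbabilityMeasure π → ∀ z : E, ∀ t, 0 ≤ t →
      ENNReal.ofReal (c⁻¹ ^ 3 * ∫ x, f x ∂π) * P t z Set.univ ≤
        ∫⁻ x, P t x Set.univ ∂π := by
  intro π hπ z t ht
  obtain ⟨x₀⟩ := nonempty_of_isProbabilityMeasure π
  have hc₁ : 1 ≤ c :=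
    one_le_of_two_sided_estimate (ν := P t0 x₀) hc (hf_pos x₀) (h_tse x₀ univ .univ)
  have hpointwise : ∀ x, ENNReal.ofReal (c⁻¹ * f x) * P t z univ ≤
      ENNReal.ofReal (c ^ 2) * P t x univ := fun x =>
    mul_survival_le_const_mul_survival ht0.le hP_sub
      (fun s t hs ht y => h_semigroup s t hs ht y univ .univ) h_mono
      (fun y A hA => (h_tse y A hA).1) (fun y A hA => (h_tse y A hA).2)
      (ENNReal.one_le_ofReal.2 (by nlinarith))
      (fun y => ENNReal.ofReal_le_ofReal (by nlinarith [hf_bdd y])) ht x z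
  have hcancel : ENNReal.ofReal (c⁻¹ ^ 2) * ENNReal.ofReal (c ^ 2) = 1 := by
    rw [← ENNReal.ofReal_mul (by positivity), inv_pow, inv_mul_cancel₀ (by positivity),
      ENNReal.ofReal_one]
  calc ENNReal.ofReal (c⁻¹ ^ 3 * ∫ x, f x ∂π) * P t z univ
      = ∫⁻ x, ENNReal.ofReal (c⁻¹ ^ 2) * (ENNReal.ofReal (c⁻¹ * f x) * P t z univ) ∂π := by
        rw [ofReal_mul_integral_eq_lintegral_ofReal_mul (by positivity) hf_meas
            (fun x => (hf_pos x).le) hf_bdd,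
          ← lintegral_mul_const' _ _ (ne_top_of_le_ne_top ENNReal.one_ne_top (hP_sub t ht z))]
        congr with x
        rw [← mul_assoc, ← ENNReal.ofReal_mul (by positivity)]
        ring_nf
    _ ≤ ∫⁻ x, ENNReal.ofReal (c⁻¹ ^ 2) * (ENNReal.ofReal (c ^ 2) * P t x univ) ∂π :=
        lintegral_mono fun x => mul_le_mul_right (hpointwise x) _
    _ = ∫⁻ x, P t x univ ∂π := by simp_rw [← mul_assoc, hcancel, one_mul]

theorem survival_lower_bound_under_two_sided_estimate
    {E : Type*} [MeasurableSpace E]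
    (t0 c : ℝ) (ht0 : 0 < t0) (hc : 0 < c)
    (μ : Measure E) [IsProbabilityMeasure μ]
    (f : E → ℝ) (hf_meas : Measurable f) (hf_pos : ∀ x, 0 < f x)
    (hf_bdd : ∀ x, f x ≤ c)
    (P : ℝ → E → Measure E)
    (hP_meas : ∀ t, ∀ A : Set E, MeasurableSet A → Measurable (fun x => P t x A))
    (hP_sub : ∀ t, 0 ≤ t → ∀ x, P t x Set.univ ≤ 1)
    (h_semigroup : ∀ s t, 0 ≤ s → 0 ≤ t → ∀ x, ∀ A : Set E, MeasurableSet A →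
      P (s + t) x A = ∫⁻ y, P t y A ∂(P s x))
    (h_mono : ∀ s t, 0 ≤ s → s ≤ t → ∀ x, P t x Set.univ ≤ P s x Set.univ)
    (h_tse : ∀ x, ∀ A : Set E, MeasurableSet A →
      ENNReal.ofReal (c⁻¹ * f x) * μ A ≤ P t0 x A ∧
      P t0 x A ≤ ENNReal.ofReal (c * f x) * μ A) :
    ∀ π : Measure E, IsProbabilityMeasure π → ∀ z : E, ∀ t, 0 ≤ t →
      ENNReal.ofReal (c⁻¹ ^ 3 * ∫ x, f x ∂π) * P t z Set.univ ≤
        ∫⁻ x, P t x Set.univ ∂π :=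
  survival_lower_bound_under_two_sided_estimate_general t0 c ht0 hc μ f hf_meas hf_pos hf_bdd P
    hP_sub h_semigroup h_mono h_tse
end

section
/- Under the two-sided estimate c⁻¹ f(x) μ(·) ≤ δ_x P_{t0}(·) ≤ c f(x) μ(·) with μ a probability measure, any quasi-stationary distribution α (i.e., a probability measure on E with α P_t(·)/α P_t(E) = α(·) for all t ≥ 0) satisfies c⁻² μ(A) ≤ α(A) ≤ c² μ(A) for all measurable A. -/
open MeasureTheory Set

theorem qsd_two_sided_bound
    {E : Type*} [MeasurableSpace E]
    (t0 c : ℝ) (ht0 : 0 < t0) (hc : 0 < c)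
    (μ : Measure E) [IsProbabilityMeasure μ]
    (f : E → ℝ) (hf_meas : Measurable f) (hf_pos : ∀ x, 0 < f x)
    (P : ℝ → E → Measure E)
    (hP_meas : ∀ t, ∀ A : Set E, MeasurableSet A → Measurable (fun x => P t x A))
    (hP_sub : ∀ t, 0 ≤ t → ∀ x, P t x Set.univ ≤ 1)
    (h_tse : ∀ x, ∀ A : Set E, MeasurableSet A →
      ENNReal.ofReal (c⁻¹ * f x) * μ A ≤ P t0 x A ∧
      P t0 x A ≤ ENNReal.ofReal (c * f x) * μ A)
    (α : Measure E) [IsProbabilityMeasure α]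
    (h_qsd : ∀ t, 0 ≤ t → ∀ A : Set E, MeasurableSet A →
      ∫⁻ x, P t x A ∂α = (∫⁻ x, P t x Set.univ ∂α) * α A)
    (h_pos : 0 < ∫⁻ x, P t0 x Set.univ ∂α) :
    ∀ A : Set E, MeasurableSet A →
      ENNReal.ofReal (c⁻¹ ^ 2) * μ A ≤ α A ∧ α A ≤ ENNReal.ofReal (c ^ 2) * μ A := by
  set F : ENNReal := ∫⁻ x, ENNReal.ofReal (f x) ∂α with hF
  set m : ENNReal := ∫⁻ x, P t0 x Set.univ ∂α with hm
  have hcinv : (0:ℝ) < c⁻¹ := inv_pos.mpr hc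
  have hoc : ENNReal.ofReal c ≠ 0 := (ENNReal.ofReal_pos.mpr hc).ne'
  have hoct : ENNReal.ofReal c ≠ ⊤ := ENNReal.ofReal_ne_top
  have hoci : ENNReal.ofReal c⁻¹ ≠ 0 := (ENNReal.ofReal_pos.mpr hcinv).ne'
  have hinv : ENNReal.ofReal c⁻¹ = (ENNReal.ofReal c)⁻¹ := ENNReal.ofReal_inv_of_pos hc
  -- key computation
  have key : ∀ A : Set E, MeasurableSet A →
      ENNReal.ofReal c⁻¹ * (F * μ A) ≤ m * α A ∧
      m * α A ≤ ENNReal.ofReal c * (F * μ A) := by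
    intro A hA
    rw [← h_qsd t0 ht0.le A hA]
    have hlow : ∫⁻ x, ENNReal.ofReal (c⁻¹ * f x) * μ A ∂α
        = ENNReal.ofReal c⁻¹ * (F * μ A) := by
      simp only [ENNReal.ofReal_mul hcinv.le, mul_assoc]
      rw [lintegral_const_mul' _ _ ENNReal.ofReal_ne_top,
        lintegral_mul_const' _ _ (measure_ne_top μ A)]
    have hhigh : ∫⁻ x, ENNReal.ofReal (c * f x) * μ A ∂α
        = ENNReal.ofReal c * (F * μ A) := by
      simp only [ENNReal.ofReal_mul hc.le, mul_assoc]
      rw [lintegral_const_mul' _ _ ENNReal.ofReal_ne_top,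
        lintegral_mul_const' _ _ (measure_ne_top μ A)]
    constructor
    · rw [← hlow]; exact lintegral_mono fun x => (h_tse x A hA).1
    · rw [← hhigh]; exact lintegral_mono fun x => (h_tse x A hA).2
  have keyu := key Set.univ MeasurableSet.univ
  simp only [measure_univ, mul_one] at keyu
  obtain ⟨hmlow, hmhigh⟩ := keyu
  have hm1 : m ≤ 1 := by
    calc m ≤ ∫⁻ _x, 1 ∂α := lintegral_mono fun x => hP_sub t0 ht0.le x
    _ = 1 := by simp
  have hFtop : F ≠ ⊤ := by
    intro h
    rw [h, ENNReal.mul_top hoci] at hmlow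
    exact absurd (le_trans hmlow hm1) (by simp)
  have hF0 : F ≠ 0 := by
    intro h
    rw [h, mul_zero] at hmhigh
    exact absurd (lt_of_lt_of_le h_pos hmhigh) (by simp)
  intro A hA
  obtain ⟨h₁, h₂⟩ := key A hA
  have hcan : ∀ a b : ENNReal, F * a ≤ F * b → a ≤ b := fun a b h =>
    (ENNReal.mul_le_mul_iff_right hF0 hFtop).mp h
  constructor
  · -- lower bound
    have : ENNReal.ofReal c⁻¹ * (F * μ A) ≤ ENNReal.ofReal c * (F * α A) := by
      calc ENNReal.ofReal c⁻¹ * (F * μ A) ≤ m * α A := h₁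
      _ ≤ ENNReal.ofReal c * F * α A := mul_le_mul_left hmhigh _
      _ = ENNReal.ofReal c * (F * α A) := by ring
    have h3 : F * (ENNReal.ofReal c⁻¹ * μ A) ≤ F * (ENNReal.ofReal c * α A) := by
      calc F * (ENNReal.ofReal c⁻¹ * μ A) = ENNReal.ofReal c⁻¹ * (F * μ A) := by ring
      _ ≤ ENNReal.ofReal c * (F * α A) := this
      _ = F * (ENNReal.ofReal c * α A) := by ring
    have h4 := hcan _ _ h3
    have h5 : (ENNReal.ofReal c)⁻¹ * ((ENNReal.ofReal c)⁻¹ * μ A)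
        ≤ (ENNReal.ofReal c)⁻¹ * (ENNReal.ofReal c * α A) := by
      rw [hinv] at h4
      exact mul_le_mul_right h4 _
    have h6 : (ENNReal.ofReal c)⁻¹ * (ENNReal.ofReal c * α A) = α A := by
      rw [← mul_assoc, ENNReal.inv_mul_cancel hoc hoct, one_mul]
    rw [h6, ← mul_assoc] at h5
    calc ENNReal.ofReal (c⁻¹ ^ 2) * μ A
        = (ENNReal.ofReal c)⁻¹ * (ENNReal.ofReal c)⁻¹ * μ A := by
          rw [sq, ENNReal.ofReal_mul hcinv.le, hinv]
    _ ≤ α A := h5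
  · -- upper bound
    have : ENNReal.ofReal c⁻¹ * (F * α A) ≤ ENNReal.ofReal c * (F * μ A) := by
      calc ENNReal.ofReal c⁻¹ * (F * α A) = ENNReal.ofReal c⁻¹ * F * α A := by ring
      _ ≤ m * α A := mul_le_mul_left hmlow _
      _ ≤ ENNReal.ofReal c * (F * μ A) := h₂
    have h3 : F * (ENNReal.ofReal c⁻¹ * α A) ≤ F * (ENNReal.ofReal c * μ A) := by
      calc F * (ENNReal.ofReal c⁻¹ * α A) = ENNReal.ofReal c⁻¹ * (F * α A) := by ring
      _ ≤ ENNReal.ofReal c * (F * μ A) := this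
      _ = F * (ENNReal.ofReal c * μ A) := by ring
    have h4 := hcan _ _ h3
    rw [hinv] at h4
    have h5 : ENNReal.ofReal c * ((ENNReal.ofReal c)⁻¹ * α A)
        ≤ ENNReal.ofReal c * (ENNReal.ofReal c * μ A) := mul_le_mul_right h4 _
    have h6 : ENNReal.ofReal c * ((ENNReal.ofReal c)⁻¹ * α A) = α A := by
      rw [← mul_assoc, ENNReal.mul_inv_cancel hoc hoct, one_mul]
    rw [h6] at h5
    calc α A ≤ ENNReal.ofReal c * (ENNReal.ofReal c * μ A) := h5
    _ = ENNReal.ofReal (c ^ 2) * μ A := by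
        rw [sq, ENNReal.ofReal_mul hc.le, mul_assoc]
end

section
/- Let (P_t)_{t≥0} be a sub-Markovian semigroup on E, ν a probability measure on E, and t₀ > 0, c₁, c₂ > 0 constants such that: (A1) for all x ∈ E and measurable A, P_x(X_{t₀} ∈ A) ≥ c₁ ν(A) P_x(t₀ < τ_∂); and (A2) for all z ∈ E, t ≥ 0, P_ν(t < τ_∂) ≥ c₂ P_z(t < τ_∂). Then for every probability measure μ on E and all t ≥ t₀: P_μ(t < τ_∂) ≥ c₁ c₂ P_μ(t₀ < τ_∂) · sup_{z∈E} P_z(t < τ_∂). -/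
/-!
Write `t = t₀ + s`. By the semigroup property,
`P_x(t < τ_∂) = ∫ P_y(s < τ_∂) P_{t₀}(x, dy)`, and (A1) says that `P_{t₀}(x, ·)` dominates
`c₁ P_x(t₀ < τ_∂) ν`, so `P_x(t < τ_∂) ≥ c₁ P_x(t₀ < τ_∂) P_ν(s < τ_∂)`. By (A2) and the
monotonicity of survival, `P_ν(s < τ_∂) ≥ c₂ P_z(s < τ_∂) ≥ c₂ P_z(t < τ_∂)` for every `z`.
Integrating the pointwise bound against `μ` gives the claim.
-/

open MeasureTheory ENNReal

theorem MeasureTheory.Measure.smul_le_of_forall_measurableSet {α : Type*} [MeasurableSpace α]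
    {μ ν : Measure α} {c : ℝ≥0∞} (h : ∀ A, MeasurableSet A → c * ν A ≤ μ A) : c • ν ≤ μ :=
  Measure.le_iff.2 fun A hA => by simpa using h A hA

theorem MeasureTheory.const_mul_lintegral_le_of_smul_le {α : Type*} [MeasurableSpace α]
    {μ ν : Measure α} {c : ℝ≥0∞} (h : c • ν ≤ μ) (f : α → ℝ≥0∞) :
    c * ∫⁻ x, f x ∂ν ≤ ∫⁻ x, f x ∂μ := by
  rw [← smul_eq_mul, ← lintegral_smul_measure]
  exact lintegral_mono' h le_rfl

theorem const_mul_iSup_le_of_le_of_forall_const_mul_le {ι : Type*} {f g : ι → ℝ≥0∞}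
    {c a : ℝ≥0∞} (hgf : ∀ i, g i ≤ f i) (hf : ∀ i, c * f i ≤ a) : c * ⨆ i, g i ≤ a := by
  rw [ENNReal.mul_iSup]
  exact iSup_le fun i => (mul_le_mul_right (hgf i) c).trans (hf i)

theorem survival_lower_bound_from_A1_A2_general
    {E : Type*} [MeasurableSpace E]
    (t₀ c₁ c₂ : ℝ) (ht₀ : 0 < t₀) (hc₁ : 0 < c₁)
    (ν : Measure E)
    (P : ℝ → E → Measure E)
    (h_semigroup : ∀ s t, 0 ≤ s → 0 ≤ t → ∀ x, ∀ A : Set E, MeasurableSet A →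
      P (s + t) x A = ∫⁻ y, P t y A ∂(P s x))
    (h_mono : ∀ s t, 0 ≤ s → s ≤ t → ∀ x, P t x Set.univ ≤ P s x Set.univ)
    (hA1 : ∀ x, ∀ A : Set E, MeasurableSet A →
      ENNReal.ofReal c₁ * ν A * P t₀ x Set.univ ≤ P t₀ x A)
    (hA2 : ∀ z : E, ∀ t, 0 ≤ t →
      ENNReal.ofReal c₂ * P t z Set.univ ≤ ∫⁻ x, P t x Set.univ ∂ν) :
    ∀ μ : Measure E, IsProbabilityMeasure μ → ∀ t, t₀ ≤ t →
      ENNReal.ofReal (c₁ * c₂) * (∫⁻ x, P t₀ x Set.univ ∂μ) *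
          (⨆ z : E, P t z Set.univ) ≤
        ∫⁻ x, P t x Set.univ ∂μ := by
  intro μ _ t ht
  obtain ⟨s, hs, rfl⟩ : ∃ s, 0 ≤ s ∧ t = t₀ + s := ⟨t - t₀, by linarith, by ring⟩
  set S := ⨆ z : E, P (t₀ + s) z Set.univ
  have hS : ENNReal.ofReal c₂ * S ≤ ∫⁻ y, P s y Set.univ ∂ν :=
    const_mul_iSup_le_of_le_of_forall_const_mul_le
      (h_mono s (t₀ + s) hs (by linarith)) (hA2 · s hs)
  have hpoint : ∀ x, ENNReal.ofReal c₁ * P t₀ x Set.univ * ∫⁻ y, P s y Set.univ ∂ν ≤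
      P (t₀ + s) x Set.univ := fun x => by
    rw [h_semigroup t₀ s ht₀.le hs x _ MeasurableSet.univ]
    refine const_mul_lintegral_le_of_smul_le (Measure.smul_le_of_forall_measurableSet ?_) _
    intro A hA
    simpa only [mul_right_comm] using hA1 x A hA
  calc ENNReal.ofReal (c₁ * c₂) * (∫⁻ x, P t₀ x Set.univ ∂μ) * S
      = ENNReal.ofReal c₁ * (ENNReal.ofReal c₂ * S) * ∫⁻ x, P t₀ x Set.univ ∂μ := by
        rw [ENNReal.ofReal_mul hc₁.le]; ring
    _ ≤ ∫⁻ x, ENNReal.ofReal c₁ * (ENNReal.ofReal c₂ * S) * P t₀ x Set.univ ∂μ :=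
        lintegral_const_mul_le _ _
    _ ≤ ∫⁻ x, P (t₀ + s) x Set.univ ∂μ := lintegral_mono fun x =>
        calc _ = ENNReal.ofReal c₁ * P t₀ x Set.univ * (ENNReal.ofReal c₂ * S) := by ring
          _ ≤ _ := (mul_le_mul_right hS _).trans (hpoint x)

theorem survival_lower_bound_from_A1_A2
    {E : Type*} [MeasurableSpace E]
    (t₀ c₁ c₂ : ℝ) (ht₀ : 0 < t₀) (hc₁ : 0 < c₁) (hc₂ : 0 < c₂)
    (ν : Measure E) [IsProbabilityMeasure ν]
    (P : ℝ → E → Measure E)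
    (hP_meas : ∀ t, ∀ A : Set E, MeasurableSet A → Measurable (fun x => P t x A))
    (hP_sub : ∀ t, 0 ≤ t → ∀ x, P t x Set.univ ≤ 1)
    (h_semigroup : ∀ s t, 0 ≤ s → 0 ≤ t → ∀ x, ∀ A : Set E, MeasurableSet A →
      P (s + t) x A = ∫⁻ y, P t y A ∂(P s x))
    (h_mono : ∀ s t, 0 ≤ s → s ≤ t → ∀ x, P t x Set.univ ≤ P s x Set.univ)
    (hA1 : ∀ x, ∀ A : Set E, MeasurableSet A →
      ENNReal.ofReal c₁ * ν A * P t₀ x Set.univ ≤ P t₀ x A)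
    (hA2 : ∀ z : E, ∀ t, 0 ≤ t →
      ENNReal.ofReal c₂ * P t z Set.univ ≤ ∫⁻ x, P t x Set.univ ∂ν) :
    ∀ μ : Measure E, IsProbabilityMeasure μ → ∀ t, t₀ ≤ t →
      ENNReal.ofReal (c₁ * c₂) * (∫⁻ x, P t₀ x Set.univ ∂μ) *
          (⨆ z : E, P t z Set.univ) ≤
        ∫⁻ x, P t x Set.univ ∂μ :=
  survival_lower_bound_from_A1_A2_general t₀ c₁ c₂ ht₀ hc₁ ν P h_semigroup h_mono hA1 hA2
end
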